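/- Let α be a type, let R be a binary relation on α, and let ≈ be the equivalence relation generated by R (EqvGen R). Let s be a nonempty finite subset of α, let R' be the relation R together with all pairs (x, y) with x, y ∈ s, and let ≈' be the equivalence relation generated by R'. Then for every x ∈ s, the ≈'-equivalence class of x equals the union over y ∈ s of the ≈-equivalence classes of y: { z : z ≈' x } = ⋃_{y ∈ s} { z : z ≈ y }. -/

import Mathlib

/-! An `R'`-chain between two points either avoids the new pairs of `s × s`, and is then an
`R`-chain, or its first and last new pair show that both endpoints are `R`-equivalent to points
of `s`. Applied to a chain ending at `x ∈ s` this gives the union of the `R`-classes of `s`. -/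

namespace Relation

variable {α : Type*} {R : α → α → Prop} {s : Set α}

theorem EqvGen.exists_mem_of_left {a b : α} (hab : EqvGen R a b) (hb : ∃ y ∈ s, EqvGen R b y) :
    ∃ y ∈ s, EqvGen R a y :=
  hb.imp fun _ ⟨hy, hby⟩ => ⟨hy, hab.trans _ _ _ hby⟩

theorem eqvGen_or_mem_mem_iff {a b : α} :
    EqvGen (fun a b => R a b ∨ a ∈ s ∧ b ∈ s) a b ↔
      EqvGen R a b ∨ (∃ y ∈ s, EqvGen R a y) ∧ ∃ y ∈ s, EqvGen R b y := by
  constructor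
  · intro h
    induction h with
    | rel a b hab =>
      rcases hab with hab | ⟨ha, hb⟩
      · exact .inl (.rel _ _ hab)
      · exact .inr ⟨⟨a, ha, .refl a⟩, ⟨b, hb, .refl b⟩⟩
    | refl a => exact .inl (.refl a)
    | symm a b _ ih => exact ih.imp (EqvGen.symm _ _) And.symm
    | trans a b c _ _ ihab ihbc =>
      rcases ihab, ihbc with ⟨hab | ⟨ha, hb⟩, hbc | ⟨hb', hc⟩⟩
      · exact .inl (hab.trans _ _ _ hbc)
      · exact .inr ⟨hab.exists_mem_of_left hb', hc⟩
      · exact .inr ⟨ha, (EqvGen.symm _ _ hbc).exists_mem_of_left hb⟩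
      · exact .inr ⟨ha, hc⟩
  · have hmono := EqvGen.mono (r := R) (p := fun a b => R a b ∨ a ∈ s ∧ b ∈ s)
      fun _ _ => .inl
    rintro (hab | ⟨⟨y, hy, hay⟩, ⟨y', hy', hby'⟩⟩)
    · exact hmono _ _ hab
    · exact (hmono _ _ hay).trans _ _ _ <| (EqvGen.rel _ _ (.inr ⟨hy, hy'⟩)).trans _ _ _ <|
        EqvGen.symm _ _ (hmono _ _ hby')

theorem eqvGen_or_mem_mem_iff_of_mem {a x : α} (hx : x ∈ s) :
    EqvGen (fun a b => R a b ∨ a ∈ s ∧ b ∈ s) a x ↔ ∃ y ∈ s, EqvGen R a y := by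
  rw [eqvGen_or_mem_mem_iff]
  exact ⟨fun h => h.elim (fun hax => ⟨x, hx, hax⟩) And.left,
    fun h => .inr ⟨h, x, hx, .refl x⟩⟩

end Relation

theorem eqvGen_class_union_general {α : Type*} (R : α → α → Prop)
    (s : Finset α)
    (R' : α → α → Prop) (hR' : ∀ a b, R' a b ↔ R a b ∨ (a ∈ s ∧ b ∈ s))
    (x : α) (hx : x ∈ s) :
    {z | Relation.EqvGen R' z x} = ⋃ y ∈ s, {z | Relation.EqvGen R z y} := by
  obtain rfl : R' = fun a b => R a b ∨ a ∈ (s : Set α) ∧ b ∈ (s : Set α) :=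
    funext₂ fun a b => propext (hR' a b)
  ext z
  simpa using Relation.eqvGen_or_mem_mem_iff_of_mem (R := R) (a := z) (Finset.mem_coe.mpr hx)

/-- Adding a new relation `s` (a nonempty finite set whose elements are all
pairwise identified) to a relation `R` merges equivalence classes: for every
`x ∈ s`, the `Relation.EqvGen R'`-class of `x` is the union over `y ∈ s` of the
`Relation.EqvGen R`-classes of `y`. -/
theorem eqvGen_class_union {α : Type*} (R : α → α → Prop)
    (s : Finset α) (hs : s.Nonempty)
    (R' : α → α → Prop) (hR' : ∀ a b, R' a b ↔ R a b ∨ (a ∈ s ∧ b ∈ s))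
    (x : α) (hx : x ∈ s) :
    {z | Relation.EqvGen R' z x} = ⋃ y ∈ s, {z | Relation.EqvGen R z y} :=
  eqvGen_class_union_general R s R' hR' x hx
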